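/- arXiv:1704.00607 — 2 statements merged into one kernel-verified Lean document; each statement's English description precedes it below -/
import Mathlib

section
/- (Decomposition) Let X_i, X_j, X_k and a vector X_K of random variables be given, all taking values in metric spaces. If the conditional distribution of X_i given (X_j = x_j, X_k = x_k, X_K = x_K) does not depend on (x_j, x_k) — i.e. c^K_{i,{j,k}} = 0 — then the conditional distribution of X_i given (X_j, X_K) does not depend on x_j (c^K_{i,j} = 0) and the conditional distribution of X_i given (X_k, X_K) does not depend on x_k (c^K_{i,k} = 0). -/
open MeasureTheory

/-- **Decomposition.** Let `κ (a, b, c)` be the conditional law of `X_i` given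
`(X_j = a, X_k = b, X_K = c)`, and let `κj (a, c)` (resp. `κk (b, c)`) be the conditional law of
`X_i` given `(X_j = a, X_K = c)` (resp. `(X_k = b, X_K = c)`), related to `κ` by the law of total
probability: `κj (a, c)` is the mixture of `κ (a, ·, c)` with respect to the conditional law
`lamk (a, c)` of `X_k` given `(X_j = a, X_K = c)`, and symmetrically for `κk`.
If `κ` does not depend on `(a, b)` (i.e. `c^K_{i,{j,k}} = 0`), then `κj` does not depend on `a`
(i.e. `c^K_{i,j} = 0`) and `κk` does not depend on `b` (i.e. `c^K_{i,k} = 0`). -/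
theorem decomposition_of_dependency_measure
    {α β γ E : Type*} [MeasurableSpace α] [MeasurableSpace β] [MeasurableSpace γ]
    [MeasurableSpace E] [MetricSpace α] [MetricSpace β]
    (κ : α × β × γ → Measure E)
    (κj : α × γ → Measure E) (κk : β × γ → Measure E)
    (lamk : α × γ → Measure β) (lamj : β × γ → Measure α)
    (hlamk : ∀ a c, IsProbabilityMeasure (lamk (a, c)))
    (hlamj : ∀ b c, IsProbabilityMeasure (lamj (b, c)))
    (htotk : ∀ a c, κj (a, c) = (lamk (a, c)).bind (fun b => κ (a, b, c)))
    (htotj : ∀ b c, κk (b, c) = (lamj (b, c)).bind (fun a => κ (a, b, c)))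
    (h : ∀ (a a' : α) (b b' : β) (c : γ), κ (a, b, c) = κ (a', b', c)) :
    (∀ (a a' : α) (c : γ), κj (a, c) = κj (a', c)) ∧
      (∀ (b b' : β) (c : γ), κk (b, c) = κk (b', c)) := by
  constructor
  · intro a a' c
    have hne : Nonempty β := by
      by_contra hβ
      have := (hlamk a c).measure_univ
      rw [Set.univ_eq_empty_iff.2 (not_nonempty_iff.1 hβ), measure_empty] at this
      exact one_ne_zero this.symm
    obtain ⟨b₀⟩ := hne
    have key : ∀ (a : α), κj (a, c) = κ (a, b₀, c) := by
      intro x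
      rw [htotk x c]
      have : (fun b => κ (x, b, c)) = fun _ => κ (x, b₀, c) := by
        funext b; exact h x x b b₀ c
      rw [this, Measure.bind_const, (hlamk x c).measure_univ, one_smul]
    rw [key a, key a', h a a' b₀ b₀ c]
  · intro b b' c
    have hne : Nonempty α := by
      by_contra hα
      have := (hlamj b c).measure_univ
      rw [Set.univ_eq_empty_iff.2 (not_nonempty_iff.1 hα), measure_empty] at this
      exact one_ne_zero this.symm
    obtain ⟨a₀⟩ := hne
    have key : ∀ (b : β), κk (b, c) = κ (a₀, b, c) := by
      intro x
      rw [htotj x c]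
      have : (fun a => κ (a, x, c)) = fun _ => κ (a₀, x, c) := by
        funext a; exact h a a₀ x x c
      rw [this, Measure.bind_const, (hlamj x c).measure_univ, one_smul]
    rw [key b, key b', h a₀ a₀ b b' c]
end

section
/- (Intersection) If the conditional distribution of X_i given (X_j, X_k, X_K) does not depend on the value of X_j (c^{K∪{k}}_{i,j} = 0) and also does not depend on the value of X_k (c^{K∪{j}}_{i,k} = 0), where these hold for ALL realizations (not just those of positive probability), then it does not depend on the joint value of (X_j, X_k) (c^K_{i,{j,k}} = 0). -/
open MeasureTheory

/-- **Intersection.** Let `κ (a, b, c)` be the conditional law of `X_i` given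
`(X_j = a, X_k = b, X_K = c)`, defined for ALL realizations (not just those of positive
probability). If `κ` does not depend on `a` (i.e. `c^{K∪{k}}_{i,j} = 0`) and does not depend on
`b` (i.e. `c^{K∪{j}}_{i,k} = 0`), then it does not depend on the joint value `(a, b)`
(i.e. `c^K_{i,{j,k}} = 0`). Unlike the intersection property of ordinary conditional
independence, no positivity assumption is needed. -/
theorem intersection_of_dependency_measure
    {α β γ E : Type*} [MeasurableSpace E] [MetricSpace α] [MetricSpace β]
    (κ : α × β × γ → Measure E)
    (hj : ∀ (a a' : α) (b : β) (c : γ), κ (a, b, c) = κ (a', b, c))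
    (hk : ∀ (a : α) (b b' : β) (c : γ), κ (a, b, c) = κ (a, b', c)) :
    ∀ (a a' : α) (b b' : β) (c : γ), κ (a, b, c) = κ (a', b', c) := by
  intro a a' b b' c
  rw [hj a a' b c, hk a' b b' c]
end
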